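/- Let R be a root system with an involutive automorphism θ and parabolic subset Q. Suppose α ∈ Qᶜ ∩ θ(Qᶜ) (where Qᶜ = R \ Q) admits a decomposition α = β₁ + ⋯ + β_r of minimal length r with all β_i ∈ (Q ∩ θ(Qᶜ)) ∪ (Qᶜ ∩ θ(Q)). Then there is a permutation (i₁,…,i_r) of (1,…,r) such that every partial sum β_{i₁} + ⋯ + β_{i_h} (1 ≤ h ≤ r) together with α gives a root: α + β_{i₁} + ⋯ + β_{i_h} ∈ R for all 1 ≤ h ≤ r (so (β_{i₁},…,β_{i_r}) is an H-sequence for α). -/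

import Mathlib

/-!
Induct on the number of summands of a family of roots whose sum `σ` is a root and no nonempty
subfamily of which sums to zero. Since `‖σ‖² = ∑ ⟪σ, βᵢ⟫`, some `βᵢ` has `⟪σ, βᵢ⟫ > 0`, so
`σ - βᵢ` is a root unless `σ = βᵢ`, which the zero-sum condition excludes when there are at least
two summands. Order the other summands by induction and put `βᵢ` last. A minimal decomposition
satisfies the zero-sum condition, since dropping a zero-sum subfamily would shorten it.
-/

open scoped RealInnerProductSpace BigOperators

variable {V : Type*} [NormedAddCommGroup V] [InnerProductSpace ℝ V]

/-- `R` is a (finite, reduced) root system in the Euclidean space `V`. -/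
def IsRootSys (R : Set V) : Prop :=
  R.Finite ∧ (0 : V) ∉ R ∧
  (∀ α ∈ R, ∀ β ∈ R, β - (2 * ⟪β, α⟫ / ⟪α, α⟫) • α ∈ R) ∧
  (∀ α ∈ R, ∀ β ∈ R, ∃ n : ℤ, 2 * ⟪β, α⟫ / ⟪α, α⟫ = (n : ℝ)) ∧
  (∀ α ∈ R, ∀ t : ℝ, t • α ∈ R → t = 1 ∨ t = -1)

/-- `Q` is a parabolic subset of `R`. -/
def IsParabolicSet (R Q : Set V) : Prop :=
  Q ⊆ R ∧ (∀ α ∈ Q, ∀ β ∈ Q, α + β ∈ R → α + β ∈ Q) ∧ (∀ α ∈ R, α ∈ Q ∨ -α ∈ Q)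

/-- `θ` is an involutive automorphism of the root system `R`. -/
def IsRootInvolution (R : Set V) (θ : V →ₗ[ℝ] V) : Prop :=
  (∀ x : V, θ (θ x) = x) ∧ (∀ α ∈ R, θ α ∈ R) ∧ (∀ x y : V, ⟪θ x, θ y⟫ = ⟪x, y⟫)

/-- Membership of a root in `(Q ∩ θ(Qᶜ)) ∪ (Qᶜ ∩ θ(Q))`, where `Qᶜ = R \ Q`. -/
def MemMixed (R Q : Set V) (θ : V →ₗ[ℝ] V) (β : V) : Prop :=
  (β ∈ Q ∧ θ β ∉ Q) ∨ (β ∈ R ∧ β ∉ Q ∧ θ β ∈ Q)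

theorem exists_inner_pos_of_sum_ne_zero {ι : Type*} [Fintype ι] {f : ι → V}
    (hf : ∑ i, f i ≠ 0) : ∃ i, 0 < ⟪∑ j, f j, f i⟫ := by
  by_contra! h
  have : ⟪∑ j, f j, ∑ j, f j⟫ ≤ 0 := by
    rw [inner_sum]
    exact Finset.sum_nonpos fun i _ => h i
  exact hf (real_inner_self_nonpos.1 this)

theorem sum_ne_zero_of_minimal {M : Type*} [AddCommMonoid M] {P : M → Prop} {α : M} {r : ℕ}
    {β : Fin r → M} (hβ : ∀ i, P (β i)) (hsum : ∑ i, β i = α)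
    (hmin : ∀ r' : ℕ, r' < r → ¬ ∃ β' : Fin r' → M, (∀ i, P (β' i)) ∧ ∑ i, β' i = α)
    {U : Finset (Fin r)} (hU : U.Nonempty) : ∑ i ∈ U, β i ≠ 0 := by
  intro hU0
  refine hmin Uᶜ.card (by simpa using U.card_compl_lt_iff_nonempty.2 hU)
    ⟨fun j => β (Uᶜ.equivFin.symm j), fun j => hβ _, ?_⟩
  rw [Equiv.sum_comp Uᶜ.equivFin.symm (fun x => β x), Finset.sum_coe_sort, ← hsum,
    ← Finset.sum_compl_add_sum U, hU0, add_zero]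

theorem Equiv.Perm.exists_apply_castSucc_eq_succAbove {n : ℕ} (i : Fin (n + 1))
    (π : Equiv.Perm (Fin n)) :
    ∃ σ : Equiv.Perm (Fin (n + 1)), ∀ k, σ k.castSucc = i.succAbove (π k) :=
  ⟨(finSuccEquiv' (Fin.last n)).trans ((Equiv.optionCongr π).trans (finSuccEquiv' i).symm),
    fun k => by simp [finSuccEquiv'_last_apply_castSucc]⟩

theorem MemMixed.mem {R Q : Set V} {θ : V →ₗ[ℝ] V} {β : V} (hQR : Q ⊆ R)
    (hβ : MemMixed R Q θ β) : β ∈ R :=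
  hβ.elim (fun h => hQR h.1) (fun h => h.1)

namespace IsRootSys

variable {R : Set V}

theorem neg_mem (hR : IsRootSys R) {γ : V} (hγ : γ ∈ R) : -γ ∈ R := by
  have hγγ : ⟪γ, γ⟫ ≠ 0 := inner_self_ne_zero.2 fun h => hR.2.1 (h ▸ hγ)
  have h := hR.2.2.1 γ hγ γ hγ
  rwa [mul_div_assoc, div_self hγγ, mul_one, two_smul, sub_add_eq_sub_sub, sub_self,
    zero_sub] at h

theorem sub_mem_of_inner_pos (hR : IsRootSys R) {γ δ : V} (hγ : γ ∈ R) (hδ : δ ∈ R)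
    (hpos : 0 < ⟪γ, δ⟫) (hne : γ ≠ δ) : γ - δ ∈ R := by
  have hγγ : 0 < ⟪γ, γ⟫ := real_inner_self_pos.2 (by rintro rfl; simp at hpos)
  have hδδ : 0 < ⟪δ, δ⟫ := real_inner_self_pos.2 (by rintro rfl; simp at hpos)
  obtain ⟨n, hn⟩ := hR.2.2.2.1 δ hδ γ hγ
  obtain ⟨m, hm⟩ := hR.2.2.2.1 γ hγ δ hδ
  by_cases hn1 : n = 1
  · have h := hR.2.2.1 δ hδ γ hγ
    rwa [hn, hn1, Int.cast_one, one_smul] at h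
  by_cases hm1 : m = 1
  · have h := hR.2.2.1 γ hγ δ hδ
    rw [hm, hm1, Int.cast_one, one_smul] at h
    simpa using hR.neg_mem h
  -- Both Cartan integers are at least 2, which forces `‖γ - δ‖² ≤ 0`.
  have le_of_cartan {k : ℤ} {y : ℝ} (hk1 : k ≠ 1) (hy : 0 < y) (hk : 2 * ⟪γ, δ⟫ / y = k) :
      y ≤ ⟪γ, δ⟫ := by
    have hk0 : (0 : ℝ) < k := hk ▸ div_pos (by linarith) hy
    have : (2 : ℝ) ≤ k := by exact_mod_cast (show 2 ≤ k by have := Int.cast_pos.1 hk0; omega)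
    rw [div_eq_iff hy.ne'] at hk
    nlinarith
  have hδ2 := le_of_cartan hn1 hδδ hn
  have hγ2 := le_of_cartan hm1 hγγ (real_inner_comm γ δ ▸ hm)
  refine absurd (sub_eq_zero.1 (real_inner_self_nonpos.1 ?_)) hne
  rw [inner_sub_sub_self, real_inner_comm γ δ]
  linarith

theorem exists_perm_sum_Iic_mem (hR : IsRootSys R) :
    ∀ {n : ℕ} (β : Fin n → V), (∀ i, β i ∈ R) → ∑ i, β i ∈ R →
      (∀ U : Finset (Fin n), U.Nonempty → ∑ i ∈ U, β i ≠ 0) →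
      ∃ π : Equiv.Perm (Fin n), ∀ h, ∑ i ∈ Finset.Iic h, β (π i) ∈ R
  | 0, _, _, _, _ => ⟨1, fun h => h.elim0⟩
  | n + 1, β, hβ, hsum, hfree => by
    obtain ⟨i, hi⟩ := exists_inner_pos_of_sum_ne_zero fun h => hR.2.1 (h ▸ hsum)
    set β' : Fin n → V := fun k => β (i.succAbove k)
    have hsum' : ∑ k, β' k = ∑ j, β j - β i := by
      rw [Fin.sum_univ_succAbove β i, add_sub_cancel_left]
    have hfree' (U : Finset (Fin n)) (hU : U.Nonempty) : ∑ k ∈ U, β' k ≠ 0 := by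
      simpa [Finset.sum_map] using hfree (U.map (Fin.succAboveEmb i)) hU.map
    obtain ⟨π', hπ'⟩ : ∃ π' : Equiv.Perm (Fin n), ∀ k, ∑ j ∈ Finset.Iic k, β' (π' j) ∈ R := by
      rcases isEmpty_or_nonempty (Fin n) with hn | hn
      · exact ⟨1, fun k => isEmptyElim k⟩
      refine exists_perm_sum_Iic_mem hR β' (fun _ => hβ _) ?_ hfree'
      rw [hsum']
      refine hR.sub_mem_of_inner_pos hsum (hβ i) hi fun h => ?_
      exact hfree' Finset.univ Finset.univ_nonempty (by rw [hsum', h, sub_self])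
    obtain ⟨π, hπ⟩ := Equiv.Perm.exists_apply_castSucc_eq_succAbove i π'
    refine ⟨π, Fin.lastCases ?_ fun k => ?_⟩
    · rw [← Fin.top_eq_last, Finset.Iic_top, Equiv.sum_comp π β]
      exact hsum
    · rw [Fin.sum_Iic_castSucc]
      simpa only [hπ] using hπ' k

end IsRootSys

theorem minimal_decomposition_reorders_to_H_sequence_general
    (R Q : Set V) (hR : IsRootSys R) (hQ : IsParabolicSet R Q)
    (θ : V →ₗ[ℝ] V)
    (α : V) (hα : α ∈ R)
    (r : ℕ) (β : Fin r → V)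
    (hβ : ∀ i, MemMixed R Q θ (β i))
    (hsum : ∑ i, β i = α)
    (hmin : ∀ r' : ℕ, r' < r → ¬ ∃ β' : Fin r' → V,
      (∀ i, MemMixed R Q θ (β' i)) ∧ ∑ i, β' i = α) :
    ∃ π : Equiv.Perm (Fin r), ∀ h : Fin r, (∑ i ∈ Finset.Iic h, β (π i)) ∈ R :=
  hR.exists_perm_sum_Iic_mem β (fun i => (hβ i).mem hQ.1) (hsum ▸ hα)
    fun _ hU => sum_ne_zero_of_minimal hβ hsum hmin hU

/-- if `α ∈ Qᶜ ∩ θ(Qᶜ)` admits a minimal-length decomposition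
`α = β₁ + ⋯ + β_r` with all `β_i ∈ (Q ∩ θ(Qᶜ)) ∪ (Qᶜ ∩ θ(Q))`, then the `β_i` can be
permuted so that all partial sums `β_{i₁} + ⋯ + β_{i_h}` are roots, i.e. the permuted tuple
is an H-sequence for `α`. -/
theorem minimal_decomposition_reorders_to_H_sequence
    (R Q : Set V) (hR : IsRootSys R) (hQ : IsParabolicSet R Q)
    (θ : V →ₗ[ℝ] V) (hθ : IsRootInvolution R θ)
    (α : V) (hα : α ∈ R) (hαQ : α ∉ Q) (hαθ : θ α ∉ Q)
    (r : ℕ) (β : Fin r → V)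
    (hβ : ∀ i, MemMixed R Q θ (β i))
    (hsum : ∑ i, β i = α)
    (hmin : ∀ r' : ℕ, r' < r → ¬ ∃ β' : Fin r' → V,
      (∀ i, MemMixed R Q θ (β' i)) ∧ ∑ i, β' i = α) :
    ∃ π : Equiv.Perm (Fin r), ∀ h : Fin r, (∑ i ∈ Finset.Iic h, β (π i)) ∈ R :=
  minimal_decomposition_reorders_to_H_sequence_general R Q hR hQ θ α hα r β hβ hsum hmin
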